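/- Fix b₁ ≠ 0 and λ₁, λ₃ > 0, λ₂ = 0, and consider the minimizer (θ₁(b₂), θ₂(b₂)) of l(θ) = (1/2)‖θ − (b₁, b₂)‖² + λ₁‖θ‖₂ + λ₃|θ₂| as a function of b₂. If |b₂| ≤ λ₃ then θ₂(b₂) = 0 and θ₁(b₂) = sign(b₁)(|b₁| − λ₁)₊ does not depend on b₂. -/

import Mathlib

/-!
The objective is `½‖θ - b‖² + g θ` with `g` convex, so it grows at least like `½‖θ - c‖²` away
from any point `c` at which `b - c` is a subgradient of `g`. For `c = (s(b₁, λ₁), 0)` this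
subgradient condition splits into the scalar soft-thresholding conditions for `(b₁, λ₁)` and
`(b₂, λ₃)`, the latter giving `0` exactly because `|b₂| ≤ λ₃`; the Euclidean norm is only
needed through `|θ₁| ≤ ‖θ‖₂`. A minimizer cannot beat `c`, hence equals it.
-/

noncomputable def softThreshold (x lam : ℝ) : ℝ := Real.sign x * max (|x| - lam) 0

lemma softThreshold_eq_zero_of_abs_le {x lam : ℝ} (h : |x| ≤ lam) : softThreshold x lam = 0 := by
  rw [softThreshold, max_eq_right (by linarith), mul_zero]

lemma softThreshold_subgradient {lam : ℝ} (hlam : 0 ≤ lam) (x t : ℝ) :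
    lam * |softThreshold x lam| + (t - softThreshold x lam) * (x - softThreshold x lam)
      ≤ lam * |t| := by
  rcases le_or_gt |x| lam with hle | hgt
  · rw [softThreshold_eq_zero_of_abs_le hle]
    have : t * x ≤ lam * |t| := calc
      t * x ≤ |t| * |x| := by rw [← abs_mul]; exact le_abs_self _
      _ ≤ lam * |t| := by rw [mul_comm]; exact mul_le_mul_of_nonneg_right hle (abs_nonneg t)
    simpa using this
  rcases lt_or_gt_of_ne (show x ≠ 0 by rintro rfl; simp at hgt; linarith) with hneg | hpos
  · rw [abs_of_neg hneg] at hgt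
    have hs : softThreshold x lam = x + lam := by
      rw [softThreshold, Real.sign_of_neg hneg, abs_of_neg hneg, max_eq_left (by linarith)]; ring
    rw [hs, abs_of_neg (by linarith)]
    nlinarith [neg_abs_le t]
  · rw [abs_of_pos hpos] at hgt
    have hs : softThreshold x lam = x - lam := by
      rw [softThreshold, Real.sign_of_pos hpos, abs_of_pos hpos, max_eq_left (by linarith)]; ring
    rw [hs, abs_of_pos (by linarith)]
    nlinarith [le_abs_self t]

lemma softThreshold_quadratic_growth {lam : ℝ} (hlam : 0 ≤ lam) (x t : ℝ) :
    (1/2) * (softThreshold x lam - x)^2 + lam * |softThreshold x lam|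
        + (1/2) * (t - softThreshold x lam)^2
      ≤ (1/2) * (t - x)^2 + lam * |t| := by
  nlinarith [softThreshold_subgradient hlam x t]

lemma abs_le_sqrt_sq_add_sq (a b : ℝ) : |a| ≤ Real.sqrt (a^2 + b^2) := by
  rw [← Real.sqrt_sq_eq_abs]
  exact Real.sqrt_le_sqrt (by nlinarith [sq_nonneg b])

lemma groupLasso_quadratic_growth {b₁ b₂ lam1 lam3 : ℝ} (h1 : 0 ≤ lam1) (hb₂ : |b₂| ≤ lam3)
    (t₁ t₂ : ℝ) :
    (1/2) * ((softThreshold b₁ lam1 - b₁)^2 + (0 - b₂)^2)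
        + lam1 * Real.sqrt (softThreshold b₁ lam1 ^ 2 + 0^2) + lam3 * |(0 : ℝ)|
        + (1/2) * ((t₁ - softThreshold b₁ lam1)^2 + t₂^2)
      ≤ (1/2) * ((t₁ - b₁)^2 + (t₂ - b₂)^2) + lam1 * Real.sqrt (t₁^2 + t₂^2) + lam3 * |t₂| := by
  have hfirst := softThreshold_quadratic_growth h1 b₁ t₁
  have hsecond := softThreshold_quadratic_growth ((abs_nonneg b₂).trans hb₂) b₂ t₂
  rw [softThreshold_eq_zero_of_abs_le hb₂] at hsecond
  have hnorm := mul_le_mul_of_nonneg_left (abs_le_sqrt_sq_add_sq t₁ t₂) h1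
  rw [sq (0 : ℝ), mul_zero, add_zero, Real.sqrt_sq_eq_abs]
  linarith

theorem small_predictive_input_shrunk_general (b₁ b₂ lam1 lam3 θ₁ θ₂ : ℝ)
    (h1 : 0 < lam1) (hb₂ : |b₂| ≤ lam3)
    (hmin : ∀ t₁ t₂ : ℝ,
      (1/2) * ((θ₁ - b₁)^2 + (θ₂ - b₂)^2) + lam1 * Real.sqrt (θ₁^2 + θ₂^2) + lam3 * |θ₂|
        ≤ (1/2) * ((t₁ - b₁)^2 + (t₂ - b₂)^2) + lam1 * Real.sqrt (t₁^2 + t₂^2) + lam3 * |t₂|) :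
    θ₂ = 0 ∧ θ₁ = Real.sign b₁ * max (|b₁| - lam1) 0 := by
  have hdist : (θ₁ - softThreshold b₁ lam1)^2 + θ₂^2 ≤ 0 := by
    linarith [hmin (softThreshold b₁ lam1) 0, groupLasso_quadratic_growth (b₁ := b₁) h1.le hb₂ θ₁ θ₂]
  obtain ⟨hθ₁, hθ₂⟩ := (add_eq_zero_iff_of_nonneg (sq_nonneg _) (sq_nonneg _)).mp
    (le_antisymm hdist (by positivity))
  exact ⟨sq_eq_zero_iff.mp hθ₂, sub_eq_zero.mp (sq_eq_zero_iff.mp hθ₁)⟩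

/-- If `|b₂| ≤ λ₃` (λ₂ = 0), the minimizer has `θ₂ = 0` and `θ₁` is the
soft-thresholding of `b₁`, independent of `b₂`. -/
theorem small_predictive_input_shrunk (b₁ b₂ lam1 lam3 θ₁ θ₂ : ℝ)
    (h1 : 0 < lam1) (h3 : 0 < lam3) (hb₁ : b₁ ≠ 0) (hb₂ : |b₂| ≤ lam3)
    (hmin : ∀ t₁ t₂ : ℝ,
      (1/2) * ((θ₁ - b₁)^2 + (θ₂ - b₂)^2) + lam1 * Real.sqrt (θ₁^2 + θ₂^2) + lam3 * |θ₂|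
        ≤ (1/2) * ((t₁ - b₁)^2 + (t₂ - b₂)^2) + lam1 * Real.sqrt (t₁^2 + t₂^2) + lam3 * |t₂|) :
    θ₂ = 0 ∧ θ₁ = Real.sign b₁ * max (|b₁| - lam1) 0 :=
  small_predictive_input_shrunk_general b₁ b₂ lam1 lam3 θ₁ θ₂ h1 hb₂ hmin
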